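/- Let Υ be a connected Cayley graph Cay(H;S) of a finite group H such that S contains at least three elements, at least one of which belongs to the center Z(H), and let T(Γ,ρ;Υ) be a generalized truncation of a finite |H|-regular graph Γ by Υ. Then every automorphism of T(Γ,ρ;Υ) leaves the natural partition P_Γ invariant, and the entire automorphism group Aut(T(Γ,ρ;Υ)) projects injectively onto a subgroup of Aut(Γ). -/

import Mathlib

open SimpleGraph

variable {V W : Type*}

/-- The generalized truncation `T(Γ,ρ;Υ)` of a graph `Γ` by a graph `Υ`,
with respect to a labeling `ρ` of the darts of `Γ` by vertices of `Υ`. -/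
def trunc (Γ : SimpleGraph V) (Υ : SimpleGraph W)
    (ρ : ∀ u w : V, Γ.Adj u w → W) : SimpleGraph (V × W) where
  Adj x y := (x.1 = y.1 ∧ Υ.Adj x.2 y.2) ∨
    (∃ h : Γ.Adj x.1 y.1, x.2 = ρ x.1 y.1 h ∧ y.2 = ρ y.1 x.1 h.symm)
  symm := ⟨by
    rintro ⟨u, i⟩ ⟨w, j⟩ (⟨h1, h2⟩ | ⟨h, h1, h2⟩)
    · exact Or.inl ⟨h1.symm, h2.symm⟩
    · exact Or.inr ⟨h.symm, h2, h1⟩⟩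
  loopless := ⟨by
    rintro ⟨u, i⟩ (⟨_, h⟩ | ⟨h, _⟩)
    · exact Υ.loopless.irrefl _ h
    · exact Γ.loopless.irrefl _ h⟩

/-- `ρ` is a vertex-neighborhood labeling of `Γ`: for every vertex `u`, the restriction
of `ρ` to the darts emanating from `u` is a bijection onto the vertex set of `Υ`. -/
def IsVNLabeling (Γ : SimpleGraph V) (ρ : ∀ u w : V, Γ.Adj u w → W) : Prop :=
  ∀ u : V, ∀ i : W, ∃! w : V, ∃ h : Γ.Adj u w, ρ u w h = i

/-- A permutation of the vertices is an automorphism of the graph. -/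
def IsAut (Γ : SimpleGraph V) (π : Equiv.Perm V) : Prop :=
  ∀ a b : V, Γ.Adj (π a) (π b) ↔ Γ.Adj a b

/-- The automorphism group of a graph, as a subgroup of the symmetric group. -/
def autG (Γ : SimpleGraph V) : Subgroup (Equiv.Perm V) where
  carrier := {π | IsAut Γ π}
  one_mem' := by intro a b; rfl
  mul_mem' := by
    intro f g hf hg a b
    exact (hf (g a) (g b)).trans (hg a b)
  inv_mem' := by
    intro f hf a b
    conv_rhs => rw [← (show f (f⁻¹ a) = a from f.apply_symm_apply a), ← (show f (f⁻¹ b) = b from f.apply_symm_apply b)]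
    exact (hf _ _).symm

/-- The Cayley graph `Cay(H;S)`: `a` is adjacent to `b` iff `b = s * a` for some `s ∈ S`
(for `S` closed under inverses and not containing the identity, `fromRel` introduces
no change). -/
def cayley (H : Type*) [Group H] (S : Set H) : SimpleGraph H :=
  SimpleGraph.fromRel (fun a b => ∃ s ∈ S, b = s * a)

/-!
Every edge of `Cay(H;S)` lies on a 4-cycle: for `j = t * i` pick `r ∈ S \ {t, t⁻¹}` commuting
with `t` (the central generator, or any third generator if `t` itself is central), and take
`i, t * i, r * t * i, r * i`. In the truncation, on the other hand, the blue edges form a perfect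
matching and two blocks are joined by at most one edge, so no 4-cycle contains a blue edge.
Hence automorphisms map red edges to red edges and, `Υ` being connected, blocks to blocks. The
induced permutation of `V(Γ)` preserves adjacency because blue edges go to blue edges, and an
automorphism inducing the identity on `V(Γ)` fixes every vertex, since a vertex is determined by
its block together with the block of its blue neighbour.
-/

def EveryEdgeOnFourCycle (Υ : SimpleGraph W) : Prop :=
  ∀ ⦃i j : W⦄, Υ.Adj i j → ∃ k l, Υ.Adj j k ∧ Υ.Adj k l ∧ Υ.Adj l i ∧ i ≠ k ∧ j ≠ l

section Cayley

variable {H : Type*} [Group H] {S : Set H}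

lemma cayley_adj_mul (hSone : (1 : H) ∉ S) {t : H} (ht : t ∈ S) (a : H) :
    (cayley H S).Adj a (t * a) := by
  refine ⟨fun h => hSone ?_, Or.inl ⟨t, ht, rfl⟩⟩
  rwa [← mul_eq_right.mp h.symm]

lemma exists_mem_eq_mul_of_cayley_adj (hSinv : ∀ s ∈ S, s⁻¹ ∈ S) {a b : H}
    (h : (cayley H S).Adj a b) : ∃ t ∈ S, b = t * a := by
  obtain ⟨-, ⟨t, ht, rfl⟩ | ⟨t, ht, rfl⟩⟩ := h
  · exact ⟨t, ht, rfl⟩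
  · exact ⟨t⁻¹, hSinv t ht, by rw [inv_mul_cancel_left]⟩

lemma exists_commute_mem_ne (hScard : 3 ≤ S.ncard)
    (hScentral : ∃ s ∈ S, s ∈ Subgroup.center H) (t : H) :
    ∃ r ∈ S, Commute r t ∧ r ≠ t ∧ r ≠ t⁻¹ := by
  obtain ⟨s, hs, hs_center⟩ := hScentral
  by_cases ht : t ∈ Subgroup.center H
  · have hpair : ({t, t⁻¹} : Set H).ncard < S.ncard :=
      (Set.ncard_insert_le _ _).trans_lt (by rw [Set.ncard_singleton]; omega)
    obtain ⟨r, hr, hr_ne⟩ := Set.exists_mem_notMem_of_ncard_lt_ncard hpair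
    simp only [Set.mem_insert_iff, Set.mem_singleton_iff, not_or] at hr_ne
    exact ⟨r, hr, Subgroup.mem_center_iff.mp ht r, hr_ne⟩
  · refine ⟨s, hs, (Subgroup.mem_center_iff.mp hs_center t).symm, ?_, ?_⟩
    · rintro rfl
      exact ht hs_center
    · rintro rfl
      exact ht (by simpa using (Subgroup.center H).inv_mem hs_center)

lemma cayley_everyEdgeOnFourCycle (hSinv : ∀ s ∈ S, s⁻¹ ∈ S) (hSone : (1 : H) ∉ S)
    (hScard : 3 ≤ S.ncard) (hScentral : ∃ s ∈ S, s ∈ Subgroup.center H) :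
    EveryEdgeOnFourCycle (cayley H S) := by
  intro i j hij
  obtain ⟨t, ht, rfl⟩ := exists_mem_eq_mul_of_cayley_adj hSinv hij
  obtain ⟨r, hr, hcomm, hrt, hrt_inv⟩ := exists_commute_mem_ne hScard hScentral t
  refine ⟨r * (t * i), r * i, cayley_adj_mul hSone hr _, ?_, (cayley_adj_mul hSone hr i).symm,
    ?_, ?_⟩
  · rw [← mul_assoc, hcomm.eq, mul_assoc]
    exact (cayley_adj_mul hSone ht _).symm
  · rw [← mul_assoc, ne_comm, Ne, mul_eq_right]
    exact fun h => hrt_inv (eq_inv_of_mul_eq_one_left h)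
  · exact fun h => hrt (mul_right_cancel h).symm

end Cayley

section Truncation

variable {Γ : SimpleGraph V} {Υ : SimpleGraph W} {ρ : ∀ u w : V, Γ.Adj u w → W}

lemma trunc_adj_of_adj (u : V) {i j : W} (h : Υ.Adj i j) : (trunc Γ Υ ρ).Adj (u, i) (u, j) :=
  Or.inl ⟨rfl, h⟩

lemma trunc_adj_label {u w : V} (h : Γ.Adj u w) :
    (trunc Γ Υ ρ).Adj (u, ρ u w h) (w, ρ w u h.symm) :=
  Or.inr ⟨h, rfl, rfl⟩

lemma trunc_adj_of_fst_ne {x y : V × W} (h : (trunc Γ Υ ρ).Adj x y) (hne : x.1 ≠ y.1) :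
    ∃ h : Γ.Adj x.1 y.1, x.2 = ρ x.1 y.1 h ∧ y.2 = ρ y.1 x.1 h.symm :=
  h.resolve_left fun h' => hne h'.1

lemma trunc_eq_of_adj_of_fst_eq {x y x' y' : V × W} (hxy : (trunc Γ Υ ρ).Adj x y)
    (hxy' : (trunc Γ Υ ρ).Adj x' y') (hne : x.1 ≠ y.1) (hx : x'.1 = x.1) (hy : y'.1 = y.1) :
    x' = x := by
  obtain ⟨u, i⟩ := x; obtain ⟨w, j⟩ := y; obtain ⟨u', i'⟩ := x'; obtain ⟨w', j'⟩ := y'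
  dsimp only at hx hy hne
  subst hx hy
  obtain ⟨_, hi, _⟩ := trunc_adj_of_fst_ne hxy hne
  obtain ⟨_, hi', _⟩ := trunc_adj_of_fst_ne hxy' hne
  exact Prod.ext rfl (hi'.trans hi.symm)

lemma trunc_eq_of_adj_of_adj_of_fst_ne (hρ : IsVNLabeling Γ ρ) {x y z : V × W}
    (hxy : (trunc Γ Υ ρ).Adj x y) (hxz : (trunc Γ Υ ρ).Adj x z)
    (hy : x.1 ≠ y.1) (hz : x.1 ≠ z.1) : y = z := by
  obtain ⟨hxy₁, hi, _⟩ := trunc_adj_of_fst_ne hxy hy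
  obtain ⟨hxz₁, hi', _⟩ := trunc_adj_of_fst_ne hxz hz
  have hyz : y.1 = z.1 := (hρ x.1 x.2).unique ⟨hxy₁, hi.symm⟩ ⟨hxz₁, hi'.symm⟩
  exact (trunc_eq_of_adj_of_fst_eq hxy.symm hxz.symm (Ne.symm hy) hyz.symm rfl).symm

lemma trunc_fst_eq_of_fourCycle (hρ : IsVNLabeling Γ ρ) {a b c d : V × W}
    (hab : (trunc Γ Υ ρ).Adj a b) (hbc : (trunc Γ Υ ρ).Adj b c)
    (hcd : (trunc Γ Υ ρ).Adj c d) (hda : (trunc Γ Υ ρ).Adj d a)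
    (hac : a ≠ c) (hbd : b ≠ d) : a.1 = b.1 := by
  by_contra hab₁
  have hbc₁ : b.1 = c.1 := by
    by_contra h
    exact hac (trunc_eq_of_adj_of_adj_of_fst_ne hρ hab.symm hbc (Ne.symm hab₁) h)
  have had₁ : a.1 = d.1 := by
    by_contra h
    exact hbd (trunc_eq_of_adj_of_adj_of_fst_ne hρ hab hda.symm hab₁ h)
  exact hda.ne (trunc_eq_of_adj_of_fst_eq hab hcd.symm hab₁ had₁.symm hbc₁.symm)

lemma IsAut.trunc_fst_eq_of_adj (hρ : IsVNLabeling Γ ρ) (hΥ : EveryEdgeOnFourCycle Υ)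
    {π : Equiv.Perm (V × W)} (hπ : IsAut (trunc Γ Υ ρ) π) (u : V) {i j : W}
    (hij : Υ.Adj i j) : (π (u, i)).1 = (π (u, j)).1 := by
  obtain ⟨k, l, hjk, hkl, hli, hik, hjl⟩ := hΥ hij
  have hadj {i j : W} (h : Υ.Adj i j) : (trunc Γ Υ ρ).Adj (π (u, i)) (π (u, j)) :=
    (hπ _ _).mpr (trunc_adj_of_adj u h)
  exact trunc_fst_eq_of_fourCycle hρ (hadj hij) (hadj hjk) (hadj hkl) (hadj hli)
    (π.injective.ne (by simpa using hik)) (π.injective.ne (by simpa using hjl))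

lemma IsAut.trunc_fst_eq (hρ : IsVNLabeling Γ ρ) (hΥ : EveryEdgeOnFourCycle Υ)
    (hconn : Υ.Connected) {π : Equiv.Perm (V × W)} (hπ : IsAut (trunc Γ Υ ρ) π) (u : V)
    (i j : W) : (π (u, i)).1 = (π (u, j)).1 := by
  obtain ⟨p⟩ := hconn.preconnected i j
  induction p with
  | nil => rfl
  | cons hadj _ ih => exact (hπ.trunc_fst_eq_of_adj hρ hΥ u hadj).trans ih

lemma IsAut.eq_one_of_trunc_fst_eq (hρ : IsVNLabeling Γ ρ) {π : Equiv.Perm (V × W)}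
    (hπ : IsAut (trunc Γ Υ ρ) π) (hfst : ∀ x, (π x).1 = x.1) : π = 1 := by
  refine Equiv.ext fun ⟨u, i⟩ => ?_
  obtain ⟨w, ⟨h, rfl⟩, -⟩ := hρ u i
  have hblue := trunc_adj_label (Υ := Υ) (ρ := ρ) h
  exact trunc_eq_of_adj_of_fst_eq hblue ((hπ _ _).mpr hblue) h.ne (hfst _) (hfst _)

end Truncation

def partitionStabilizer (V W : Type*) : Subgroup (Equiv.Perm (V × W)) where
  carrier := {π | ∀ x y, (π x).1 = (π y).1 ↔ x.1 = y.1}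
  one_mem' _ _ := Iff.rfl
  mul_mem' hf hg x y := (hf _ _).trans (hg x y)
  inv_mem' {f} hf x y := by simpa using (hf (f⁻¹ x) (f⁻¹ y)).symm

namespace partitionStabilizer

variable [Nonempty W]

noncomputable def proj : partitionStabilizer V W →* Equiv.Perm V where
  toFun π :=
    { toFun u := ((π : Equiv.Perm (V × W)) (u, Classical.arbitrary W)).1
      invFun u := ((π : Equiv.Perm (V × W))⁻¹ (u, Classical.arbitrary W)).1
      left_inv u := by
        simpa using ((partitionStabilizer V W).inv_mem π.2 (_, Classical.arbitrary W)
          ((π : Equiv.Perm (V × W)) (u, Classical.arbitrary W))).mpr rfl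
      right_inv u := by
        simpa using (π.2 (_, Classical.arbitrary W)
          ((π : Equiv.Perm (V × W))⁻¹ (u, Classical.arbitrary W))).mpr rfl }
  map_one' := rfl
  map_mul' π σ := by
    ext u
    exact (π.2 _ (_, Classical.arbitrary W)).mpr rfl

lemma proj_apply (π : partitionStabilizer V W) (u : V) (i : W) :
    proj π u = ((π : Equiv.Perm (V × W)) (u, i)).1 :=
  (π.2 (u, Classical.arbitrary W) (u, i)).mpr rfl

variable {Γ : SimpleGraph V} {Υ : SimpleGraph W} {ρ : ∀ u w : V, Γ.Adj u w → W}

lemma adj_proj_of_isAut {π : partitionStabilizer V W} (hπ : IsAut (trunc Γ Υ ρ) π) {u w : V}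
    (h : Γ.Adj u w) : Γ.Adj (proj π u) (proj π w) := by
  have hblue := (hπ _ _).mpr (trunc_adj_label (Υ := Υ) h)
  rw [proj_apply π u (ρ u w h), proj_apply π w (ρ w u h.symm)]
  exact (trunc_adj_of_fst_ne hblue (h.ne ∘ (π.2 _ _).mp)).1

lemma isAut_proj {π : partitionStabilizer V W} (hπ : π.1 ∈ autG (trunc Γ Υ ρ)) :
    IsAut Γ (proj π) := by
  refine fun a b => ⟨fun h => ?_, adj_proj_of_isAut hπ⟩
  have hπ_inv : IsAut (trunc Γ Υ ρ) (π⁻¹ : partitionStabilizer V W) := (autG _).inv_mem hπ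
  simpa [← Equiv.Perm.mul_apply, ← map_mul] using adj_proj_of_isAut hπ_inv h

end partitionStabilizer

lemma autG_trunc_le_partitionStabilizer {Γ : SimpleGraph V} {Υ : SimpleGraph W}
    {ρ : ∀ u w : V, Γ.Adj u w → W} (hρ : IsVNLabeling Γ ρ) (hΥ : EveryEdgeOnFourCycle Υ)
    (hconn : Υ.Connected) : autG (trunc Γ Υ ρ) ≤ partitionStabilizer V W := by
  intro π hπ ⟨u, i⟩ ⟨w, j⟩
  refine ⟨fun h => ?_, fun (h : u = w) => h ▸ hπ.trunc_fst_eq hρ hΥ hconn u i j⟩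
  have hπ_inv : IsAut (trunc Γ Υ ρ) π⁻¹ := (autG _).inv_mem hπ
  calc u = (π⁻¹ (π (u, i))).1 := by simp
    _ = (π⁻¹ ((π (w, j)).1, (π (u, i)).2)).1 := by rw [← h]
    _ = (π⁻¹ (π (w, j))).1 := hπ_inv.trunc_fst_eq hρ hΥ hconn _ _ _
    _ = w := by simp

theorem stmt4_general {V H : Type*} [Group H] (S : Set H)
    (hSinv : ∀ s ∈ S, s⁻¹ ∈ S) (hSone : (1 : H) ∉ S) (hScard : 3 ≤ S.ncard)
    (hScentral : ∃ s ∈ S, s ∈ Subgroup.center H)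
    (hconn : (cayley H S).Connected)
    (Γ : SimpleGraph V)
    (ρ : ∀ u w : V, Γ.Adj u w → H) (hρ : IsVNLabeling Γ ρ) :
    (∀ π ∈ autG (trunc Γ (cayley H S) ρ), ∀ u : V, ∃ u' : V, ∀ i : H, (π (u, i)).1 = u') ∧
    ∃ F : autG (trunc Γ (cayley H S) ρ) →* Equiv.Perm V, Function.Injective F ∧
      (∀ π : autG (trunc Γ (cayley H S) ρ), (F π : Equiv.Perm V) ∈ autG Γ) ∧
      (∀ (π : autG (trunc Γ (cayley H S) ρ)) (u : V) (i : H),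
        ((π : Equiv.Perm (V × H)) (u, i)).1 = F π u) := by
  have hle := autG_trunc_le_partitionStabilizer hρ
    (cayley_everyEdgeOnFourCycle hSinv hSone hScard hScentral) hconn
  let F := partitionStabilizer.proj.comp (Subgroup.inclusion hle)
  have hF (π : autG (trunc Γ (cayley H S) ρ)) (u : V) (i : H) :
      ((π : Equiv.Perm (V × H)) (u, i)).1 = F π u :=
    (partitionStabilizer.proj_apply (Subgroup.inclusion hle π) u i).symm
  refine ⟨fun π hπ u => ⟨_, hF ⟨π, hπ⟩ u⟩, F, ?_, fun π => partitionStabilizer.isAut_proj π.2,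
    hF⟩
  refine (injective_iff_map_eq_one F).mpr fun π hπ => Subtype.ext ?_
  exact π.2.eq_one_of_trunc_fst_eq hρ fun ⟨u, i⟩ => (hF π u i).trans (by rw [hπ]; rfl)

/-- Let `Υ = Cay(H;S)` be a connected Cayley graph of a finite group `H`
where `S` has at least three elements, at least one of them central in `H`, and let
`T(Γ,ρ;Υ)` be a generalized truncation of a finite `|H|`-regular graph `Γ` by `Υ`.
Then every automorphism of `T(Γ,ρ;Υ)` leaves the natural partition invariant, and
`Aut(T(Γ,ρ;Υ))` projects injectively onto a subgroup of `Aut(Γ)`. -/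
theorem stmt4 {V H : Type*} [Fintype V] [DecidableEq V] [Fintype H] [DecidableEq H]
    [Group H] (S : Set H)
    (hSinv : ∀ s ∈ S, s⁻¹ ∈ S) (hSone : (1 : H) ∉ S) (hScard : 3 ≤ S.ncard)
    (hScentral : ∃ s ∈ S, s ∈ Subgroup.center H)
    (hconn : (cayley H S).Connected)
    (Γ : SimpleGraph V) [DecidableRel Γ.Adj]
    (hreg : Γ.IsRegularOfDegree (Fintype.card H))
    (ρ : ∀ u w : V, Γ.Adj u w → H) (hρ : IsVNLabeling Γ ρ) :
    (∀ π ∈ autG (trunc Γ (cayley H S) ρ), ∀ u : V, ∃ u' : V, ∀ i : H, (π (u, i)).1 = u') ∧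
    ∃ F : autG (trunc Γ (cayley H S) ρ) →* Equiv.Perm V, Function.Injective F ∧
      (∀ π : autG (trunc Γ (cayley H S) ρ), (F π : Equiv.Perm V) ∈ autG Γ) ∧
      (∀ (π : autG (trunc Γ (cayley H S) ρ)) (u : V) (i : H),
        ((π : Equiv.Perm (V × H)) (u, i)).1 = F π u) :=
  stmt4_general S hSinv hSone hScard hScentral hconn Γ ρ hρ
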